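/- Let Ω be a commutative semigroup and (A, (*_{α,β})_{α,β∈Ω}) an Ω-zinbiel algebra. Define x ≺_{α,β} y := y *_{β,α} x and x ≻_{α,β} y := x *_{α,β} y. Then (A, (≺_{α,β}), (≻_{α,β})) is an Ω-dendriform algebra, and moreover x ≻_{α,β} y = y ≺_{β,α} x. -/
import Mathlib


/-- `x ≺_{α,β} y := y *_{β,α} x`. -/
def zpre {k Ω A : Type*} [Field k] [AddCommGroup A] [Module k A]
    (star : Ω → Ω → A →ₗ[k] A →ₗ[k] A) (α β : Ω) (x y : A) : A :=
  star β α y x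

/-- `x ≻_{α,β} y := x *_{α,β} y`. -/
def zpost {k Ω A : Type*} [Field k] [AddCommGroup A] [Module k A]
    (star : Ω → Ω → A →ₗ[k] A →ₗ[k] A) (α β : Ω) (x y : A) : A :=
  star α β x y

/-- An Ω-zinbiel algebra gives an Ω-dendriform algebra via
`x ≺_{α,β} y = y *_{β,α} x` and `x ≻_{α,β} y = x *_{α,β} y`;
moreover `x ≻_{α,β} y = y ≺_{β,α} x`. -/
theorem omegaZinbiel_omegaDendriform
    {k Ω A : Type*} [Field k] [CommSemigroup Ω] [AddCommGroup A] [Module k A]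
    (star : Ω → Ω → A →ₗ[k] A →ₗ[k] A)
    (hz : ∀ (α β γ : Ω) (x y z : A),
      star α (β * γ) x (star β γ y z)
        = star (α * β) γ (star α β x y) z + star (α * β) γ (star β α y x) z) :
    (∀ (α β γ : Ω) (x y z : A),
      zpre star (α * β) γ (zpre star α β x y) z
        = zpre star α (β * γ) x (zpre star β γ y z + zpost star β γ y z))
    ∧ (∀ (α β γ : Ω) (x y z : A),
      zpre star (α * β) γ (zpost star α β x y) z
        = zpost star α (β * γ) x (zpre star β γ y z))
    ∧ (∀ (α β γ : Ω) (x y z : A),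
      zpost star (α * β) γ (zpre star α β x y + zpost star α β x y) z
        = zpost star α (β * γ) x (zpost star β γ y z))
    ∧ (∀ (α β : Ω) (x y : A),
      zpost star α β x y = zpre star β α y x) := by
  refine ⟨?_, ?_, ?_, fun α β x y => rfl⟩
  · intro α β γ x y z
    simp only [zpre, zpost, map_add, LinearMap.add_apply]
    rw [mul_comm α β, hz γ β α z y x, mul_comm γ β]
  · intro α β γ x y z
    simp only [zpre, zpost]
    rw [hz γ α β z x y, mul_comm β γ, hz α γ β x z y, mul_comm γ α]
    abel
  · intro α β γ x y z
    simp only [zpre, zpost, map_add, LinearMap.add_apply]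
    rw [hz α β γ x y z]
    abel
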